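/- Let σ be a Hanabi deck over n values with a single color (c = 1) and let h be a hand size. If no card of σ is useless (for hand size h) and σ contains at least one card of each value 1,…,n, then σ has a winning play sequence with hand size h. -/
import Mathlib


/-- A card is a pair (value, color). -/
abbrev Card : Type := ℕ × ℕ

/-- The card at (0-indexed) position `i` of deck `σ` (junk `(0,0)` when out of range). -/
def nth (σ : List Card) (i : ℕ) : Card := σ.getD i (0, 0)

/-- A configuration: for each color, the highest value played so far in that color
(values `1,…,played k` of color `k` count as played), the hand (the set of positions
of the cards currently stored), and the set of positions of the cards played so far. -/
structure Config where
  played : ℕ → ℕ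
  hand : Finset ℕ
  done : Finset ℕ

/-- `PlayFromHand σ cfg cfg'`: starting from `cfg`, play zero or more cards stored
in the hand (each playable card increments the progress of its color). -/
inductive PlayFromHand (σ : List Card) : Config → Config → Prop
  | refl (cfg : Config) : PlayFromHand σ cfg cfg
  | play (cfg cfg' : Config) (j : ℕ) (hj : j ∈ cfg.hand)
      (hplay : cfg.played (nth σ j).2 + 1 = (nth σ j).1)
      (htail : PlayFromHand σ
        ⟨Function.update cfg.played (nth σ j).2 (nth σ j).1,
          cfg.hand.erase j, insert j cfg.done⟩ cfg') :
      PlayFromHand σ cfg cfg'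

/-- `Step σ h i cfg cfg'`: processing the drawn card at position `i` with hand size `h`,
the player either discards it, stores it (the hand may never exceed `h` cards), or plays
it immediately (followed by playing any number of stored cards). -/
inductive Step (σ : List Card) (h : ℕ) (i : ℕ) : Config → Config → Prop
  | discard (cfg : Config) : Step σ h i cfg cfg
  | store (cfg : Config) (hsize : (insert i cfg.hand).card ≤ h) :
      Step σ h i cfg ⟨cfg.played, insert i cfg.hand, cfg.done⟩
  | playNow (cfg cfg' : Config)
      (hplay : cfg.played (nth σ i).2 + 1 = (nth σ i).1)
      (htail : PlayFromHand σ
        ⟨Function.update cfg.played (nth σ i).2 (nth σ i).1,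
          cfg.hand, insert i cfg.done⟩ cfg') :
      Step σ h i cfg cfg'

/-- The initial configuration: nothing played, empty hand. -/
def Config.initial : Config := ⟨fun _ => 0, ∅, ∅⟩

/-- A play sequence with hand size `h` on deck `σ`, starting from configuration `start`:
a sequence of configurations where the `i`-th step processes the card at position `i`. -/
structure PlaySeq (σ : List Card) (h : ℕ) (start : Config) where
  cfgs : ℕ → Config
  init : cfgs 0 = start
  step : ∀ i < σ.length, Step σ h i (cfgs i) (cfgs (i + 1))

/-- The final configuration of a play sequence. -/
def PlaySeq.final {σ : List Card} {h : ℕ} {start : Config} (ps : PlaySeq σ h start) :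
    Config := ps.cfgs σ.length

/-- A winning play sequence: for every color `k ∈ {1,…,c}`, all values `1,…,n` are played. -/
def PlaySeq.Winning {σ : List Card} {h : ℕ} {start : Config} (ps : PlaySeq σ h start)
    (n c : ℕ) : Prop :=
  ∀ k, 1 ≤ k → k ≤ c → n ≤ ps.final.played k

/-- `σ` is a deck over `n` values and `c` colors. -/
def ValidDeck (σ : List Card) (n c : ℕ) : Prop :=
  ∀ cd ∈ σ, 1 ≤ cd.1 ∧ cd.1 ≤ n ∧ 1 ≤ cd.2 ∧ cd.2 ≤ c

/-- The `i`-th card of a single-color deck `σ` is *useless* for hand size `h` (over `n`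
values) if there are `h+1` values `w_1 < ⋯ < w_{h+1}`, all larger than the value of the
`i`-th card and at most `n`, such that no card with value among them appears after
position `i` in `σ`. -/
def Useless (σ : List Card) (h n i : ℕ) : Prop :=
  ∃ W : Finset ℕ, W.card = h + 1 ∧
    (∀ x ∈ W, (nth σ i).1 < x ∧ x ≤ n) ∧
    (∀ j, i < j → j < σ.length → (nth σ j).1 ∉ W)

/- ===== auxiliary development ===== -/

/-- The played-function with progress `p` in color 1 and nothing elsewhere. -/
def Pfun (p : ℕ) : ℕ → ℕ := fun k => if k = 1 then p else 0

lemma Pfun_update (q v : ℕ) : Function.update (Pfun q) 1 v = Pfun v := by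
  funext k; by_cases hk : k = 1 <;> simp [Function.update, Pfun, hk]

lemma Pfun_zero : Pfun 0 = fun _ => 0 := by
  funext k; simp [Pfun]

/-- Value `w` is dead after position `i`: no card from position `i` on has value `w`. -/
def Dead (σ : List Card) (w i : ℕ) : Prop :=
  ∀ l, i ≤ l → l < σ.length → (nth σ l).1 ≠ w

lemma Dead.mono {σ : List Card} {w i i' : ℕ} (hd : Dead σ w i) (hii : i ≤ i') :
    Dead σ w i' := fun l hl => hd l (le_trans hii hl)

lemma nth_mem {σ : List Card} {i : ℕ} (hi : i < σ.length) : nth σ i ∈ σ := by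
  unfold nth; rw [List.getD_eq_getElem _ _ hi]; exact List.getElem_mem _

lemma card_facts {σ : List Card} {n : ℕ} (hval : ValidDeck σ n 1) {i : ℕ}
    (hi : i < σ.length) :
    1 ≤ (nth σ i).1 ∧ (nth σ i).1 ≤ n ∧ (nth σ i).2 = 1 := by
  obtain ⟨h1, h2, h3, h4⟩ := hval _ (nth_mem hi)
  exact ⟨h1, h2, le_antisymm h4 h3⟩

/-- Invariant of the greedy strategy before processing position `i`. -/
structure StratInv (σ : List Card) (n h i p : ℕ) (H : Finset ℕ) : Prop where
  hp : p ≤ n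
  hcard : H.card ≤ h
  hlt : ∀ j ∈ H, j < i
  hvalH : ∀ j ∈ H, p + 1 < (nth σ j).1 ∧ (nth σ j).1 ≤ n
  hdead : ∀ j ∈ H, Dead σ (nth σ j).1 i
  hinj : ∀ j ∈ H, ∀ j' ∈ H, (nth σ j).1 = (nth σ j').1 → j = j'
  hcomp : ∀ w, p < w → w ≤ n → Dead σ w i → ∃ j ∈ H, (nth σ j).1 = w

/-- The maximal chain of plays from the hand. -/
lemma chain (σ : List Card) : ∀ (m : ℕ) (H : Finset ℕ) (q : ℕ) (d : Finset ℕ),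
    H.card ≤ m →
    (∀ j ∈ H, j < σ.length ∧ (nth σ j).2 = 1) →
    (∀ j ∈ H, q < (nth σ j).1) →
    (∀ j ∈ H, ∀ j' ∈ H, (nth σ j).1 = (nth σ j').1 → j = j') →
    ∃ q' H' d', PlayFromHand σ ⟨Pfun q, H, d⟩ ⟨Pfun q', H', d'⟩ ∧
      q ≤ q' ∧ H' ⊆ H ∧
      (∀ j ∈ H, (q' < (nth σ j).1 ↔ j ∈ H')) ∧
      (∀ j ∈ H', (nth σ j).1 ≠ q' + 1) ∧
      (q' = q ∨ ∃ j ∈ H, (nth σ j).1 = q') := by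
  intro m
  induction m with
  | zero =>
    intro H q d hcard _ hgt _
    have hH : H = ∅ := Finset.card_eq_zero.mp (Nat.le_zero.mp hcard)
    subst hH
    exact ⟨q, ∅, d, PlayFromHand.refl _, le_refl _, Finset.Subset.refl _,
      by simp, by simp, Or.inl rfl⟩
  | succ m ih =>
    intro H q d hcard hcol hgt hinj
    by_cases hex : ∃ j ∈ H, (nth σ j).1 = q + 1
    · obtain ⟨j, hjH, hvj⟩ := hex
      have hcol1 := (hcol j hjH).2
      have herase : (H.erase j).card ≤ m := by
        have := Finset.card_erase_of_mem hjH
        omega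
      obtain ⟨q', H', d', hpf, hq, hsub, hiff, hne, hor⟩ :=
        ih (H.erase j) (q + 1) (insert j d) herase
          (fun j' hj' => hcol j' (Finset.mem_of_mem_erase hj'))
          (fun j' hj' => by
            have h1 := hgt j' (Finset.mem_of_mem_erase hj')
            have h2 : (nth σ j').1 ≠ q + 1 := fun hc => by
              have := hinj j' (Finset.mem_of_mem_erase hj') j hjH (hc.trans hvj.symm)
              exact (Finset.ne_of_mem_erase hj') this
            omega)
          (fun a ha b hb => hinj a (Finset.mem_of_mem_erase ha) b
            (Finset.mem_of_mem_erase hb))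
      refine ⟨q', H', d', ?_, by omega, fun a ha => Finset.mem_of_mem_erase (hsub ha),
        ?_, hne, ?_⟩
      · refine PlayFromHand.play _ _ j hjH ?_ ?_
        · show Pfun q (nth σ j).2 + 1 = (nth σ j).1
          rw [hcol1, hvj]; simp [Pfun]
        · show PlayFromHand σ ⟨Function.update (Pfun q) (nth σ j).2 (nth σ j).1,
            H.erase j, insert j d⟩ _
          rw [hcol1, hvj, Pfun_update]
          exact hpf
      · intro j0 hj0
        by_cases hj0j : j0 = j
        · subst hj0j
          have h1 : ¬ q' < (nth σ j0).1 := by rw [hvj]; omega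
          have h2 : j0 ∉ H' := fun hc => Finset.notMem_erase j0 H (hsub hc)
          exact ⟨fun hc => absurd hc h1, fun hc => absurd hc h2⟩
        · exact hiff j0 (Finset.mem_erase.mpr ⟨hj0j, hj0⟩)
      · rcases hor with h | ⟨j', hj', hv'⟩
        · exact Or.inr ⟨j, hjH, by omega⟩
        · exact Or.inr ⟨j', Finset.mem_of_mem_erase hj', hv'⟩
    · push_neg at hex
      exact ⟨q, H, d, PlayFromHand.refl _, le_refl _, Finset.Subset.refl _,
        fun j hj => ⟨fun _ => hj, fun _ => hgt j hj⟩, hex, Or.inl rfl⟩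

lemma glue {σ : List Card} {h n i : ℕ} {cfg cfg' : Config}
    (hstep : Step σ h i cfg cfg') (hi : i < σ.length)
    (cfgs : ℕ → Config) (hc : cfgs (i+1) = cfg')
    (hsteps : ∀ j, i+1 ≤ j → j < σ.length → Step σ h j (cfgs j) (cfgs (j+1)))
    (hfin : n ≤ (cfgs σ.length).played 1) :
    ∃ cfgs' : ℕ → Config, cfgs' i = cfg ∧
      (∀ j, i ≤ j → j < σ.length → Step σ h j (cfgs' j) (cfgs' (j+1))) ∧
      n ≤ (cfgs' σ.length).played 1 := by
  refine ⟨fun j => if j = i then cfg else cfgs j, by simp, ?_, ?_⟩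
  · intro j hj hjl
    by_cases hji : j = i
    · subst hji
      simp only [if_pos rfl, if_neg (by omega : j + 1 ≠ j)]
      rw [hc]; exact hstep
    · simp only [if_neg hji, if_neg (by omega : j + 1 ≠ i)]
      exact hsteps j (by omega) hjl
  · simp only [if_neg (by omega : σ.length ≠ i)]
    exact hfin

lemma reach (n h : ℕ) (σ : List Card) (hval : ValidDeck σ n 1)
    (hnone : ∀ i < σ.length, ¬ Useless σ h n i) :
    ∀ (m i : ℕ), i + m = σ.length → ∀ (p : ℕ) (H d : Finset ℕ),
    StratInv σ n h i p H →
    ∃ cfgs : ℕ → Config, cfgs i = ⟨Pfun p, H, d⟩ ∧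
      (∀ j, i ≤ j → j < σ.length → Step σ h j (cfgs j) (cfgs (j+1))) ∧
      n ≤ (cfgs σ.length).played 1 := by
  intro m
  induction m with
  | zero =>
    intro i hi p H d inv
    have hi' : i = σ.length := by omega
    subst hi'
    have hpn : p = n := by
      by_contra hpn
      have hlt : p < n := lt_of_le_of_ne inv.hp hpn
      obtain ⟨j, hjH, hvj⟩ := inv.hcomp (p+1) (by omega) hlt
        (fun l hl hl' _ => by omega)
      have := (inv.hvalH j hjH).1
      omega
    refine ⟨fun _ => ⟨Pfun p, H, d⟩, rfl, fun j hj hj' => by omega, ?_⟩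
    simp [Pfun, hpn]
  | succ m ih =>
    intro i hi p H d inv
    have hilen : i < σ.length := by omega
    obtain ⟨hv1, hvn, hcol⟩ := card_facts hval hilen
    set v := (nth σ i).1 with hv
    rcases lt_trichotomy v (p+1) with hvp | hvp | hvp
    · -- v ≤ p : discard
      have inv' : StratInv σ n h (i+1) p H := by
        refine ⟨inv.hp, inv.hcard, fun j hj => by have := inv.hlt j hj; omega,
          inv.hvalH, fun j hj => (inv.hdead j hj).mono (by omega), inv.hinj, ?_⟩
        intro w hw1 hw2 hwd
        refine inv.hcomp w hw1 hw2 ?_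
        intro l hl hl' hc
        rcases Nat.eq_or_lt_of_le hl with hli | hli
        · rw [← hli] at hc; rw [← hv] at hc; omega
        · exact hwd l hli hl' hc
      obtain ⟨cfgs, hc, hsteps, hfin⟩ := ih (i+1) (by omega) p H d inv'
      exact glue (Step.discard _) hilen cfgs hc hsteps hfin
    · -- v = p+1 : play now, then chain
      obtain ⟨q', H', d', hpf, hq, hsub, hiff, hne, hor⟩ :=
        chain σ H.card H (p+1) (insert i d) (le_refl _)
          (fun j hj => ⟨by have := inv.hlt j hj; omega,
            (card_facts hval (by have := inv.hlt j hj; omega)).2.2⟩)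
          (fun j hj => (inv.hvalH j hj).1)
          inv.hinj
      have hstep : Step σ h i ⟨Pfun p, H, d⟩ ⟨Pfun q', H', d'⟩ := by
        refine Step.playNow _ _ ?_ ?_
        · show Pfun p (nth σ i).2 + 1 = (nth σ i).1
          rw [hcol, ← hv, hvp]; simp [Pfun]
        · show PlayFromHand σ ⟨Function.update (Pfun p) (nth σ i).2 (nth σ i).1,
            H, insert i d⟩ _
          rw [hcol, ← hv, hvp, Pfun_update]
          exact hpf
      have hq'n : q' ≤ n := by
        rcases hor with h1 | ⟨j, hj, hv'⟩
        · omega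
        · have := (inv.hvalH j hj).2; omega
      have inv' : StratInv σ n h (i+1) q' H' := by
        refine ⟨hq'n, le_trans (Finset.card_le_card hsub) inv.hcard,
          fun j hj => by have := inv.hlt j (hsub hj); omega,
          ?_, fun j hj => (inv.hdead j (hsub hj)).mono (by omega),
          fun a ha b hb => inv.hinj a (hsub ha) b (hsub hb), ?_⟩
        · intro j hj
          have h1 := (hiff j (hsub hj)).mpr hj
          have h2 := hne j hj
          have h3 := (inv.hvalH j (hsub hj)).2
          exact ⟨by omega, h3⟩
        · intro w hw1 hw2 hwd
          have hwv : w ≠ v := by omega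
          have hwdead : Dead σ w i := by
            intro l hl hl' hc
            rcases Nat.eq_or_lt_of_le hl with hli | hli
            · rw [← hli, ← hv] at hc; exact hwv hc.symm
            · exact hwd l hli hl' hc
          obtain ⟨j, hjH, hvj⟩ := inv.hcomp w (by omega) hw2 hwdead
          exact ⟨j, (hiff j hjH).mp (by omega), hvj⟩
      obtain ⟨cfgs, hc, hsteps, hfin⟩ := ih (i+1) (by omega) q' H' d' inv'
      exact glue hstep hilen cfgs hc hsteps hfin
    · -- v > p+1
      by_cases hdead : Dead σ v (i+1)
      · -- store
        -- p+1 appears at some position l ≥ i+1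
        have hpn : p + 1 ≤ n := by omega
        have hnotdead : ¬ Dead σ (p+1) i := by
          intro hd
          obtain ⟨j, hjH, hvj⟩ := inv.hcomp (p+1) (by omega) hpn hd
          have := (inv.hvalH j hjH).1; omega
        have hex : ∃ l, i + 1 ≤ l ∧ l < σ.length ∧ (nth σ l).1 = p + 1 := by
          by_contra hc
          push_neg at hc
          apply hnotdead
          intro l hl hl' hcc
          rcases Nat.eq_or_lt_of_le hl with hli | hli
          · rw [← hli, ← hv] at hcc; omega
          · exact hc l (by omega) hl' hcc
        obtain ⟨l, hl1, hl2, hl3⟩ := hex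
        -- values of (insert i H) are distinct, > p+1, ≤ n, dead after i+1
        have hvi : ∀ j ∈ H, (nth σ j).1 ≠ v := by
          intro j hj hc
          exact inv.hdead j hj i (le_refl i) hilen (by rw [← hv, hc])
        have hinj' : ∀ a ∈ insert i H, ∀ b ∈ insert i H,
            (nth σ a).1 = (nth σ b).1 → a = b := by
          intro a ha b hb hab
          rcases Finset.mem_insert.mp ha with ha | ha <;>
            rcases Finset.mem_insert.mp hb with hb | hb
          · rw [ha, hb]
          · exfalso; apply hvi b hb; rw [hv, ← ha]; exact hab.symm
          · exfalso; apply hvi a ha; rw [hv, ← hb]; exact hab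
          · exact inv.hinj a ha b hb hab
        have hsize : (insert i H).card ≤ h := by
          by_contra hc
          push_neg at hc
          have himg : ((insert i H).image (fun j => (nth σ j).1)).card
              = (insert i H).card :=
            Finset.card_image_of_injOn (fun a ha b hb => hinj' a ha b hb)
          obtain ⟨W, hWsub, hWcard⟩ :=
            Finset.exists_subset_card_eq (by omega :
              h + 1 ≤ ((insert i H).image (fun j => (nth σ j).1)).card)
          apply hnone l hl2
          refine ⟨W, hWcard, ?_, ?_⟩
          · intro x hx
            obtain ⟨j, hj, hjx⟩ := Finset.mem_image.mp (hWsub hx)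
            rw [hl3]
            rcases Finset.mem_insert.mp hj with hj | hj
            · subst hj; rw [← hv] at hjx; omega
            · have := inv.hvalH j hj; omega
          · intro j0 hj0 hj0' hc0
            obtain ⟨j, hj, hjx⟩ := Finset.mem_image.mp (hWsub hc0)
            rcases Finset.mem_insert.mp hj with hj | hj
            · apply hdead j0 (by omega) hj0'
              rw [← hjx, hj, ← hv]
            · exact ((inv.hdead j hj).mono (by omega : i ≤ i+1)) j0 (by omega) hj0' hjx.symm
        have inv' : StratInv σ n h (i+1) p (insert i H) := by
          refine ⟨inv.hp, hsize, ?_, ?_, ?_, hinj', ?_⟩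
          · intro j hj
            rcases Finset.mem_insert.mp hj with hj | hj
            · omega
            · have := inv.hlt j hj; omega
          · intro j hj
            rcases Finset.mem_insert.mp hj with hj | hj
            · subst hj; rw [← hv]; exact ⟨hvp, hvn⟩
            · exact inv.hvalH j hj
          · intro j hj
            rcases Finset.mem_insert.mp hj with hj | hj
            · subst hj; rw [← hv]; exact hdead
            · exact (inv.hdead j hj).mono (by omega)
          · intro w hw1 hw2 hwd
            by_cases hwv : w = v
            · exact ⟨i, Finset.mem_insert_self _ _, by rw [← hv, hwv]⟩
            · have hwdead : Dead σ w i := by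
                intro l0 hl0 hl0' hc0
                rcases Nat.eq_or_lt_of_le hl0 with hli | hli
                · rw [← hli, ← hv] at hc0; exact hwv hc0.symm
                · exact hwd l0 hli hl0' hc0
              obtain ⟨j, hjH, hvj⟩ := inv.hcomp w hw1 hw2 hwdead
              exact ⟨j, Finset.mem_insert_of_mem hjH, hvj⟩
        obtain ⟨cfgs, hc, hsteps, hfin⟩ := ih (i+1) (by omega) p (insert i H) d inv'
        exact glue (Step.store ⟨Pfun p, H, d⟩ hsize) hilen cfgs hc hsteps hfin
      · -- not dead: discard
        have inv' : StratInv σ n h (i+1) p H := by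
          refine ⟨inv.hp, inv.hcard, fun j hj => by have := inv.hlt j hj; omega,
            inv.hvalH, fun j hj => (inv.hdead j hj).mono (by omega), inv.hinj, ?_⟩
          intro w hw1 hw2 hwd
          have hwv : w ≠ v := by
            intro hc; subst hc; exact hdead ((hwd).mono (le_refl _))
          refine inv.hcomp w hw1 hw2 ?_
          intro l0 hl0 hl0' hc0
          rcases Nat.eq_or_lt_of_le hl0 with hli | hli
          · rw [← hli, ← hv] at hc0; exact hwv hc0.symm
          · exact hwd l0 hli hl0' hc0
        obtain ⟨cfgs, hc, hsteps, hfin⟩ := ih (i+1) (by omega) p H d inv'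
        exact glue (Step.discard _) hilen cfgs hc hsteps hfin

theorem winning_of_no_useless_of_all_values
    (n h : ℕ) (σ : List Card) (hval : ValidDeck σ n 1)
    (hnone : ∀ i < σ.length, ¬ Useless σ h n i)
    (hall : ∀ a, 1 ≤ a → a ≤ n → (a, 1) ∈ σ) :
    ∃ ps : PlaySeq σ h Config.initial, ps.Winning n 1 := by
  have inv0 : StratInv σ n h 0 0 ∅ := by
    refine ⟨Nat.zero_le n, by simp, by simp, by simp, by simp, by simp, ?_⟩
    intro w hw1 hw2 hwd
    exfalso
    obtain ⟨l, hl, hle⟩ := List.getElem_of_mem (hall w hw1 hw2)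
    refine hwd l (Nat.zero_le l) hl ?_
    unfold nth
    rw [List.getD_eq_getElem _ _ hl, hle]
  obtain ⟨cfgs, hc0, hsteps, hfin⟩ :=
    reach n h σ hval hnone σ.length 0 (by omega) 0 ∅ ∅ inv0
  have hinit : cfgs 0 = Config.initial := by
    rw [hc0]; unfold Config.initial; rw [Pfun_zero]
  refine ⟨⟨cfgs, hinit, fun i hi => hsteps i (Nat.zero_le i) hi⟩, ?_⟩
  intro k hk1 hk2
  have hk : k = 1 := le_antisymm hk2 hk1
  subst hk
  exact hfin
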